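/- Let (x(n)) be an APGG sequence: x(0) = AᵀB y and x(n+1) = AᵀB y + (I − AᵀBA)(x(n) − κ·g(n)) with g(n)_i ∈ ∂F(x(n)_i), where ‖I − A AᵀB‖₂ ≤ ζ < 1, κ > 0, and y = A x* + e. Then for every n ≥ 0, ‖A(x(n) − x*)‖₂ ≤ ‖y‖₂·ζ^{n+1} + (C5/2)·κ + ‖e‖₂, where C5 = 2ζα√N‖A‖₂/(1−ζ). -/

import Mathlib

open Filter Set

/-- Weak convexity on `[0,∞)` with parameter `ρ`. -/
def WeaklyConvexOnNonneg (F : ℝ → ℝ) (ρ : ℝ) : Prop :=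
  ∀ t₁ t₂ : ℝ, 0 ≤ t₁ → 0 ≤ t₂ → ∀ l : ℝ, 0 ≤ l → l ≤ 1 →
    F (l * t₁ + (1 - l) * t₂) ≤
      l * F t₁ + (1 - l) * F t₂ - ρ * l * (1 - l) * (t₁ - t₂) ^ 2

/-- `F` is a weakly convex sparseness measure with weak-convexity parameter `ρ ≤ 0`. -/
structure IsWCSM (F : ℝ → ℝ) (ρ : ℝ) : Prop where
  zero : F 0 = 0
  even : ∀ t, F (-t) = F t
  nontrivial : ∃ t, F t ≠ 0
  mono : ∀ s t : ℝ, 0 ≤ s → s ≤ t → F s ≤ F t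
  ratio_anti : ∀ s t : ℝ, 0 < s → s ≤ t → F t / t ≤ F s / s
  rho_nonpos : ρ ≤ 0
  wconv : WeaklyConvexOnNonneg F ρ

/-- `α = lim_{t→0⁺} F(t)/t`, finite and positive, with `F(t) ≤ α|t|` for all `t`. -/
def IsAlpha (F : ℝ → ℝ) (α : ℝ) : Prop :=
  0 < α ∧ Tendsto (fun t => F t / t) (nhdsWithin 0 (Set.Ioi 0)) (nhds α) ∧
    ∀ t : ℝ, F t ≤ α * |t|

/-- The generalized gradient set `∂F(t)`; by convention `∂F(0) = {0}`. -/
noncomputable def genGrad (F : ℝ → ℝ) (t : ℝ) : Set ℝ :=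
  if t = 0 then {0}
  else {f : ℝ | ∀ ν : ℝ,
    ν * f ≤ Filter.limsup (fun θ => (F (t + θ * ν) - F t) / θ) (nhdsWithin 0 (Set.Ioi 0))}

/-- Euclidean (`ℓ2`) norm of a vector. -/
noncomputable def l2 {n : ℕ} (x : Fin n → ℝ) : ℝ := Real.sqrt (∑ i, (x i) ^ 2)

/-- `ℓ1` norm of a vector. -/
def l1 {n : ℕ} (x : Fin n → ℝ) : ℝ := ∑ i, |x i|

/-- `ℓ0` "norm": number of nonzero entries. -/
noncomputable def l0 {n : ℕ} (x : Fin n → ℝ) : ℕ :=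
  (Finset.univ.filter (fun i => x i ≠ 0)).card

/-- `z_S`: the vector equal to `z` on `S` and zero elsewhere. -/
def restr {n : ℕ} (x : Fin n → ℝ) (S : Finset (Fin n)) : Fin n → ℝ :=
  fun i => if i ∈ S then x i else 0

/-- `γ` is a null-space-constant bound for `(J, A, K)`. -/
def NSCBound {M N : ℕ} (J : (Fin N → ℝ) → ℝ) (A : Matrix (Fin M) (Fin N) ℝ)
    (K : ℕ) (γ : ℝ) : Prop :=
  ∀ z : Fin N → ℝ, A.mulVec z = 0 → ∀ S : Finset (Fin N), S.card ≤ K →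
    J (restr z S) ≤ γ * J (restr z Sᶜ)

/-- Spectral norm (`ℓ2`-operator norm) of a matrix. -/
noncomputable def opNorm2 {m n : ℕ} (A : Matrix (Fin m) (Fin n) ℝ) : ℝ :=
  sSup {c : ℝ | ∃ v : Fin n → ℝ, l2 v ≤ 1 ∧ c = l2 (A.mulVec v)}

/-! The residual `r n = A x(n) − y` satisfies `r (n+1) = (I − AAᵀB)(r n − κ A g(n))`. Every
generalized gradient of `F` lies in `[−α, α]`, so `‖A g(n)‖₂ ≤ ‖A‖₂ √N α`, and the contraction
`‖I − AAᵀB‖₂ ≤ ζ` gives `‖r (n+1)‖ ≤ ζ (‖r n‖ + κ ‖A‖₂ √N α)`. Unrolling this affine recursion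
bounds `‖r n‖` by `‖y‖ ζ^{n+1} + (C5/2) κ`, and `A(x(n) − x*) = r n + e`. -/

section EuclideanNorm

open scoped Matrix Matrix.Norms.L2Operator

lemma l2_eq_norm_toLp {n : ℕ} (v : Fin n → ℝ) : l2 v = ‖WithLp.toLp 2 v‖ := by
  simp [l2, EuclideanSpace.norm_eq]

lemma l2_nonneg {n : ℕ} (v : Fin n → ℝ) : 0 ≤ l2 v := Real.sqrt_nonneg _

lemma l2_add_le {n : ℕ} (u v : Fin n → ℝ) : l2 (u + v) ≤ l2 u + l2 v := by
  simpa only [l2_eq_norm_toLp, WithLp.toLp_add] using norm_add_le _ _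

lemma l2_sub_le {n : ℕ} (u v : Fin n → ℝ) : l2 (u - v) ≤ l2 u + l2 v := by
  simpa only [l2_eq_norm_toLp, WithLp.toLp_sub] using norm_sub_le _ _

lemma l2_smul {n : ℕ} (c : ℝ) (v : Fin n → ℝ) : l2 (c • v) = |c| * l2 v := by
  simp only [l2_eq_norm_toLp, WithLp.toLp_smul, norm_smul, Real.norm_eq_abs]

lemma l2_neg {n : ℕ} (v : Fin n → ℝ) : l2 (-v) = l2 v := by
  simp only [l2_eq_norm_toLp, WithLp.toLp_neg, norm_neg]

lemma l2_le_sqrt_mul_of_abs_le {n : ℕ} {v : Fin n → ℝ} {c : ℝ} (hc : 0 ≤ c)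
    (h : ∀ i, |v i| ≤ c) : l2 v ≤ Real.sqrt n * c := calc
  l2 v ≤ Real.sqrt (∑ _i : Fin n, c ^ 2) :=
    Real.sqrt_le_sqrt <| Finset.sum_le_sum fun i _ => by
      simpa only [sq_abs] using pow_le_pow_left₀ (abs_nonneg _) (h i) 2
  _ = Real.sqrt n * c := by
    rw [Finset.sum_const, Finset.card_univ, Fintype.card_fin, nsmul_eq_mul,
      Real.sqrt_mul n.cast_nonneg, Real.sqrt_sq hc]

lemma opNorm2_eq_l2_opNorm {m n : ℕ} (A : Matrix (Fin m) (Fin n) ℝ) : opNorm2 A = ‖A‖ := by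
  rw [Matrix.l2_opNorm_def, ← ContinuousLinearMap.sSup_unitClosedBall_eq_norm]
  refine congrArg sSup (Set.ext fun c => ?_)
  constructor
  · rintro ⟨v, hv, rfl⟩
    refine ⟨WithLp.toLp 2 v, ?_, ?_⟩
    · rwa [mem_closedBall_zero_iff, ← l2_eq_norm_toLp]
    · simp [l2_eq_norm_toLp]
  · rintro ⟨v, hv, rfl⟩
    refine ⟨WithLp.ofLp v, ?_, ?_⟩
    · rwa [l2_eq_norm_toLp, WithLp.toLp_ofLp, ← mem_closedBall_zero_iff]
    · rw [l2_eq_norm_toLp]; rfl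

lemma opNorm2_nonneg {m n : ℕ} (A : Matrix (Fin m) (Fin n) ℝ) : 0 ≤ opNorm2 A :=
  opNorm2_eq_l2_opNorm A ▸ norm_nonneg A

lemma l2_mulVec_le {m n : ℕ} (A : Matrix (Fin m) (Fin n) ℝ) (v : Fin n → ℝ) :
    l2 (A *ᵥ v) ≤ opNorm2 A * l2 v := by
  rw [opNorm2_eq_l2_opNorm, l2_eq_norm_toLp, l2_eq_norm_toLp]
  exact A.l2_opNorm_mulVec (WithLp.toLp 2 v)

lemma l2_mulVec_le_of_opNorm2_le {m n : ℕ} {A : Matrix (Fin m) (Fin n) ℝ} {ζ : ℝ}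
    (hA : opNorm2 A ≤ ζ) (v : Fin n → ℝ) : l2 (A *ᵥ v) ≤ ζ * l2 v :=
  (l2_mulVec_le A v).trans (mul_le_mul_of_nonneg_right hA (l2_nonneg v))

end EuclideanNorm

/-- In `ℝ`, `limsup` is an `sInf` that defaults to `0` when unbounded below, hence the `max`. -/
lemma Real.limsup_le_max_of_eventually_le {ι : Type*} {l : Filter ι} {u : ι → ℝ} {a : ℝ}
    (h : ∀ᶠ i in l, u i ≤ a) : limsup u l ≤ max a 0 := by
  rw [limsup_eq]
  by_cases hb : BddBelow {b : ℝ | ∀ᶠ i in l, u i ≤ b}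
  · exact (csInf_le hb h).trans (le_max_left _ _)
  · rw [Real.sInf_of_not_bddBelow hb]
    exact le_max_right _ _

section GenGrad

variable {F : ℝ → ℝ} {ρ α t f : ℝ}

lemma neg_mem_genGrad_neg (heven : ∀ t, F (-t) = F t) (hf : f ∈ genGrad F t) :
    -f ∈ genGrad F (-t) := by
  by_cases ht : t = 0
  · simp_all [genGrad]
  rw [genGrad, if_neg ht] at hf
  rw [genGrad, if_neg (neg_ne_zero.mpr ht)]
  intro ν
  have hF : ∀ θ, F (-t + θ * ν) - F (-t) = F (t + θ * -ν) - F t := fun θ => by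
    rw [← heven t, ← heven (t + θ * -ν)]
    ring_nf
  simpa only [hF, neg_mul, mul_neg] using hf (-ν)

lemma abs_le_of_mem_genGrad_of_pos (hF : IsWCSM F ρ) (hα : IsAlpha F α) (ht : 0 < t)
    (hf : f ∈ genGrad F t) : |f| ≤ α := by
  obtain ⟨hα0, -, hFα⟩ := hα
  rw [genGrad, if_neg ht.ne'] at hf
  have hright : ∀ θ > 0, (F (t + θ * 1) - F t) / θ ≤ α := fun θ hθ => by
    have hratio := (div_le_div_iff₀ (by linarith) ht).mp
      (hF.ratio_anti t (t + θ * 1) ht (by linarith))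
    have hFt : F t ≤ α * t := by simpa [abs_of_pos ht] using hFα t
    rw [div_le_iff₀ hθ]
    nlinarith
  have hleft : ∀ θ ∈ Ioo 0 t, (F (t + θ * -1) - F t) / θ ≤ 0 := fun θ hθ =>
    div_nonpos_of_nonpos_of_nonneg
      (by linarith [hF.mono (t + θ * -1) t (by linarith [hθ.2]) (by linarith [hθ.1])]) hθ.1.le
  have hup : f ≤ α := by
    refine (one_mul f ▸ hf 1).trans ((Real.limsup_le_max_of_eventually_le ?_).trans
      (max_le le_rfl hα0.le))
    filter_upwards [self_mem_nhdsWithin] with θ hθ using hright θ hθ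
  have hlow : -f ≤ 0 := by
    refine (neg_one_mul f ▸ hf (-1)).trans ((Real.limsup_le_max_of_eventually_le ?_).trans
      (max_self 0).le)
    filter_upwards [Ioo_mem_nhdsGT ht] with θ hθ using hleft θ hθ
  exact abs_le.mpr ⟨by linarith, hup⟩

lemma abs_le_of_mem_genGrad (hF : IsWCSM F ρ) (hα : IsAlpha F α) (hf : f ∈ genGrad F t) :
    |f| ≤ α := by
  rcases lt_trichotomy t 0 with ht | rfl | ht
  · simpa only [abs_neg] using abs_le_of_mem_genGrad_of_pos hF hα (neg_pos.mpr ht)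
      (neg_mem_genGrad_neg hF.even hf)
  · simp_all [genGrad, hα.1.le]
  · exact abs_le_of_mem_genGrad_of_pos hF hα ht hf

lemma l2_mulVec_le_of_forall_mem_genGrad {M N : ℕ} (hF : IsWCSM F ρ) (hα : IsAlpha F α)
    (A : Matrix (Fin M) (Fin N) ℝ) {x g : Fin N → ℝ} (hg : ∀ i, g i ∈ genGrad F (x i)) :
    l2 (A.mulVec g) ≤ opNorm2 A * (Real.sqrt N * α) :=
  (l2_mulVec_le A g).trans <| mul_le_mul_of_nonneg_left
    (l2_le_sqrt_mul_of_abs_le hα.1.le fun i => abs_le_of_mem_genGrad hF hα (hg i))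
    (opNorm2_nonneg A)

end GenGrad

section Residual

open scoped Matrix

variable {R m n : Type*} [CommRing R] [Fintype m] [Fintype n] [DecidableEq m]

lemma mulVec_mulVec_sub_eq_neg (A : Matrix m n R) (G : Matrix n m R) (y : m → R) :
    A *ᵥ (G *ᵥ y) - y = -((1 - A * G) *ᵥ y) := by
  simp only [Matrix.sub_mulVec, Matrix.one_mulVec, Matrix.mulVec_mulVec]
  abel

lemma mulVec_add_sub_eq [DecidableEq n] (A : Matrix m n R) (G : Matrix n m R) (y : m → R)
    (z : n → R) : A *ᵥ (G *ᵥ y + (1 - G * A) *ᵥ z) - y = (1 - A * G) *ᵥ (A *ᵥ z - y) := by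
  simp only [Matrix.mulVec_add, Matrix.mulVec_sub, Matrix.sub_mulVec, Matrix.one_mulVec,
    ← Matrix.mulVec_mulVec]
  abel

end Residual

lemma le_pow_mul_add_of_le_mul_add {r : ℕ → ℝ} {ζ b c : ℝ} (hζ0 : 0 ≤ ζ) (hζ1 : ζ < 1)
    (hc : 0 ≤ c) (h0 : r 0 ≤ ζ * b) (hstep : ∀ n, r (n + 1) ≤ ζ * (r n + c)) (n : ℕ) :
    r n ≤ b * ζ ^ (n + 1) + ζ * c / (1 - ζ) := by
  have hfix : ζ * (ζ * c / (1 - ζ) + c) = ζ * c / (1 - ζ) := by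
    field_simp [(sub_pos.mpr hζ1).ne']
    ring
  induction n with
  | zero => linarith [div_nonneg (mul_nonneg hζ0 hc) (sub_pos.mpr hζ1).le]
  | succ n ih => calc
      r (n + 1) ≤ ζ * (r n + c) := hstep n
      _ ≤ ζ * (b * ζ ^ (n + 1) + ζ * c / (1 - ζ) + c) := by gcongr
      _ = b * ζ ^ (n + 1 + 1) + ζ * c / (1 - ζ) := by linear_combination hfix

theorem stmt15_general {M N : ℕ} (F : ℝ → ℝ) (ρ α : ℝ)
    (hF : IsWCSM F ρ) (hα : IsAlpha F α)
    (A : Matrix (Fin M) (Fin N) ℝ) (B : Matrix (Fin M) (Fin M) ℝ)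
    (xs : Fin N → ℝ) (e : Fin M → ℝ) (y : Fin M → ℝ) (hy : y = A.mulVec xs + e)
    (ζ : ℝ) (hζ : opNorm2 (1 - A * (A.transpose * B)) ≤ ζ)
    (hζ1 : ζ < 1) (κ : ℝ) (hκ : 0 < κ)
    (x g : ℕ → Fin N → ℝ)
    (hg : ∀ n i, g n i ∈ genGrad F (x n i))
    (hx0 : x 0 = (A.transpose * B).mulVec y)
    (hrec : ∀ n, x (n + 1) =
      (A.transpose * B).mulVec y + (1 - A.transpose * B * A).mulVec (x n - κ • g n))
    (C5 : ℝ) (hC5 : C5 = 2 * (ζ * α * Real.sqrt N * opNorm2 A) / (1 - ζ)) :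
    ∀ n : ℕ, l2 (A.mulVec (x n - xs)) ≤ l2 y * ζ ^ (n + 1) + C5 / 2 * κ + l2 e := by
  set P := opNorm2 A * (Real.sqrt N * α)
  have hP : 0 ≤ P := mul_nonneg (opNorm2_nonneg A) (mul_nonneg (Real.sqrt_nonneg _) hα.1.le)
  have hζ0 : 0 ≤ ζ := (opNorm2_nonneg _).trans hζ
  have hresidual (n : ℕ) : l2 (A.mulVec (x n) - y) ≤ l2 y * ζ ^ (n + 1) + C5 / 2 * κ := by
    rw [show C5 / 2 * κ = ζ * (κ * P) / (1 - ζ) by rw [hC5]; ring]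
    refine le_pow_mul_add_of_le_mul_add (r := fun k => l2 (A.mulVec (x k) - y)) hζ0 hζ1
      (mul_nonneg hκ.le hP) ?_ (fun k => ?_) n
    · rw [hx0, mulVec_mulVec_sub_eq_neg, l2_neg]
      exact l2_mulVec_le_of_opNorm2_le hζ y
    · rw [hrec, mulVec_add_sub_eq, Matrix.mulVec_sub A, Matrix.mulVec_smul, sub_right_comm]
      refine (l2_mulVec_le_of_opNorm2_le hζ _).trans (mul_le_mul_of_nonneg_left ?_ hζ0)
      refine (l2_sub_le _ _).trans ?_
      rw [l2_smul, abs_of_pos hκ]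
      gcongr
      exact l2_mulVec_le_of_forall_mem_genGrad hF hα A (hg k)
  intro n
  calc l2 (A.mulVec (x n - xs)) = l2 ((A.mulVec (x n) - y) + e) := by
        rw [hy, Matrix.mulVec_sub, sub_add_eq_sub_sub, sub_add_cancel]
    _ ≤ l2 (A.mulVec (x n) - y) + l2 e := l2_add_le _ _
    _ ≤ l2 y * ζ ^ (n + 1) + C5 / 2 * κ + l2 e := by gcongr; exact hresidual n

/-- Lemma 7: for an APGG sequence with `y = Ax* + e`,
`‖A(x(n) − x*)‖₂ ≤ ‖y‖₂ ζ^{n+1} + (C5/2)κ + ‖e‖₂`. -/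
theorem stmt15 {M N : ℕ} (hMN : M < N) (F : ℝ → ℝ) (ρ α : ℝ)
    (hF : IsWCSM F ρ) (hα : IsAlpha F α)
    (A : Matrix (Fin M) (Fin N) ℝ) (B : Matrix (Fin M) (Fin M) ℝ)
    (xs : Fin N → ℝ) (e : Fin M → ℝ) (y : Fin M → ℝ) (hy : y = A.mulVec xs + e)
    (ζ : ℝ) (hζ : opNorm2 (1 - A * (A.transpose * B)) ≤ ζ)
    (hζ1 : ζ < 1) (κ : ℝ) (hκ : 0 < κ)
    (x g : ℕ → Fin N → ℝ)
    (hg : ∀ n i, g n i ∈ genGrad F (x n i))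
    (hx0 : x 0 = (A.transpose * B).mulVec y)
    (hrec : ∀ n, x (n + 1) =
      (A.transpose * B).mulVec y + (1 - A.transpose * B * A).mulVec (x n - κ • g n))
    (C5 : ℝ) (hC5 : C5 = 2 * (ζ * α * Real.sqrt N * opNorm2 A) / (1 - ζ)) :
    ∀ n : ℕ, l2 (A.mulVec (x n - xs)) ≤ l2 y * ζ ^ (n + 1) + C5 / 2 * κ + l2 e :=
  stmt15_general F ρ α hF hα A B xs e y hy ζ hζ hζ1 κ hκ x g hg hx0 hrec C5 hC5
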